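/- Let S be a finite monoid. Then every almost pure S-act is absolutely pure. -/

import Mathlib

universe u v w

/-- A right `S`-act: a set with an action `A × S → A` with `a·1 = a`, `a·(st) = (a·s)·t`. -/
class RAct (S : Type u) [Monoid S] (A : Type v) where
  act : A → S → A
  act_one : ∀ a : A, act a 1 = a
  act_mul : ∀ (a : A) (s t : S), act a (s * t) = act (act a s) t

infixl:70 " ⊳ " => RAct.act

/-- An `S`-morphism of right `S`-acts. -/
def IsRActHom (S : Type u) [Monoid S] {A : Type v} {B : Type w}
    [RAct S A] [RAct S B] (f : A → B) : Prop :=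
  ∀ (a : A) (s : S), f (a ⊳ s) = f a ⊳ s

/-- The free `S`-act `F_S(X) = X × S`, with `(x,s)·t = (x, st)`. -/
instance freeAct (S : Type u) [Monoid S] (X : Type w) : RAct S (X × S) where
  act p s := (p.1, p.2 * s)
  act_one p := by simp
  act_mul p s t := by simp [mul_assoc]

/-- Disjoint union of two `S`-acts. -/
instance sumAct (S : Type u) [Monoid S] {A : Type v} {B : Type w} [RAct S A] [RAct S B] :
    RAct S (A ⊕ B) where
  act x s := Sum.elim (fun a => Sum.inl (a ⊳ s)) (fun b => Sum.inr (b ⊳ s)) x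
  act_one := by rintro (a | b) <;> simp [RAct.act_one]
  act_mul := by rintro (a | b) s t <;> simp [RAct.act_mul]

/-- Congruence on a right `S`-act. -/
structure IsActCongr (S : Type u) [Monoid S] {A : Type v} [RAct S A]
    (r : A → A → Prop) : Prop where
  refl : ∀ a, r a a
  symm : ∀ {a b}, r a b → r b a
  trans : ∀ {a b c}, r a b → r b c → r a c
  act : ∀ {a b} (s : S), r a b → r (a ⊳ s) (b ⊳ s)

/-- The act congruence generated by a set of pairs `H`. -/
def congGen (S : Type u) [Monoid S] {A : Type v} [RAct S A]
    (H : Set (A × A)) (a b : A) : Prop :=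
  ∀ r : A → A → Prop, IsActCongr S r → (∀ p ∈ H, r p.1 p.2) → r a b

theorem isActCongr_congGen (S : Type u) [Monoid S] {A : Type v} [RAct S A]
    (H : Set (A × A)) : IsActCongr S (congGen S H) where
  refl a := fun _r hr _ => hr.refl a
  symm h := fun r hr hH => hr.symm (h r hr hH)
  trans h1 h2 := fun r hr hH => hr.trans (h1 r hr hH) (h2 r hr hH)
  act s h := fun r hr hH => hr.act s (h r hr hH)

/-- Equations over an `S`-act `A` with variables from `X`:
`xs = yt` (which includes `xs = xt`) or `xs = a`. -/
inductive Eqn (S : Type u) (A : Type v) (X : Type w) where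
  | vv : X → S → X → S → Eqn S A X
  | vc : X → S → A → Eqn S A X

/-- `b : X → C` is a solution of `E` in the act `C`, where `ι : A → C` interprets constants. -/
def IsSolution (S : Type u) [Monoid S] {A : Type v} {X : Type w} {C : Type*}
    [RAct S C] (ι : A → C) (E : Set (Eqn S A X)) (b : X → C) : Prop :=
  (∀ x s y t, Eqn.vv x s y t ∈ E → b x ⊳ s = b y ⊳ t) ∧
  (∀ x s a, Eqn.vc x s a ∈ E → b x ⊳ s = ι a)

/-- A set of equations over `A` is consistent if it has a solution in some act containing `A`. -/
def Consistent (S : Type u) [Monoid S] {A : Type v} {X : Type w} [RAct S A]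
    (E : Set (Eqn S A X)) : Prop :=
  ∃ (B : Type (max u v w)) (_ : RAct S B) (ι : A → B),
    Function.Injective ι ∧ IsRActHom S ι ∧ ∃ b : X → B, IsSolution S ι E b

/-- `A` is `n`-absolutely pure: every finite consistent system of equations over `A`
in at most `n` variables has a solution in `A`. -/
def NPure (S : Type u) [Monoid S] (A : Type v) [RAct S A] (n : ℕ) : Prop :=
  ∀ E : Set (Eqn S A (Fin n)), E.Finite → Consistent S E →
    ∃ c : Fin n → A, IsSolution S id E c

/-- Almost pure: 1-absolutely pure. -/
def AlmostPure (S : Type u) [Monoid S] (A : Type v) [RAct S A] : Prop :=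
  NPure S A 1

/-- Absolutely pure: `n`-absolutely pure for every `n`. -/
def AbsolutelyPure (S : Type u) [Monoid S] (A : Type v) [RAct S A] : Prop :=
  ∀ n : ℕ, NPure S A n

/-- The pairs `H(Σ)` in the free act coming from constant-free equations of `E`. -/
def Hcf (S : Type u) [Monoid S] {A : Type v} {X : Type w}
    (E : Set (Eqn S A X)) : Set ((X × S) × (X × S)) :=
  {p | ∃ x u y v, Eqn.vv x u y v ∈ E ∧ p = ((x, u), (y, v))}

/-- The pairs `H(Σ) ∪ K(Σ)` on the disjoint union `A ⊔ F_S(X)`. -/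
def HK (S : Type u) [Monoid S] {A : Type v} {X : Type w}
    (E : Set (Eqn S A X)) : Set ((A ⊕ X × S) × (A ⊕ X × S)) :=
  {p | (∃ x u y v, Eqn.vv x u y v ∈ E ∧ p = (Sum.inr (x, u), Sum.inr (y, v))) ∨
       (∃ x s a, Eqn.vc x s a ∈ E ∧ p = (Sum.inr (x, s), Sum.inl a))}

/-- Quotient of an act by a generated congruence. -/
instance quotAct (S : Type u) [Monoid S] {A : Type v} [RAct S A] (H : Set (A × A)) :
    RAct S (Quot (congGen S H)) where
  act q s := Quot.map (fun a => a ⊳ s) (fun _a _b h => (isActCongr_congGen S H).act s h) q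
  act_one := by
    rintro ⟨a⟩
    show Quot.mk _ (a ⊳ (1 : S)) = Quot.mk _ a
    rw [RAct.act_one]
  act_mul := by
    rintro ⟨a⟩ s t
    show Quot.mk _ (a ⊳ (s * t)) = Quot.mk _ (a ⊳ s ⊳ t)
    rw [RAct.act_mul]

/-- The canonical extension `A(Σ) = (A ⊔ F_S(X)) / κ_Σ`. -/
abbrev ActExt (S : Type u) [Monoid S] {A : Type v} {X : Type w} [RAct S A]
    (E : Set (Eqn S A X)) : Type (max u v w) :=
  Quot (congGen S (HK S E))

/-- The natural map `ν_Σ : A → A(Σ)`. -/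
def extOfBase (S : Type u) [Monoid S] {A : Type v} {X : Type w} [RAct S A]
    (E : Set (Eqn S A X)) (a : A) : ActExt S E :=
  Quot.mk _ (Sum.inl a)

/-- A finitely generated `S`-act. -/
def IsFG (S : Type u) [Monoid S] (A : Type v) [RAct S A] : Prop :=
  ∃ T : Finset A, ∀ a : A, ∃ t ∈ T, ∃ s : S, a = t ⊳ s

/-- A monogenic (cyclic) `S`-act. -/
def Monogenic (S : Type u) [Monoid S] (C : Type v) [RAct S C] : Prop :=
  ∃ c : C, ∀ y : C, ∃ s : S, y = c ⊳ s

/-- `A` embeds into `C` as an `S`-act. -/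
def ActEmbeds (S : Type u) [Monoid S] (A : Type v) (C : Type w) [RAct S A] [RAct S C] : Prop :=
  ∃ ι : A → C, IsRActHom S ι ∧ Function.Injective ι

/-- A finitely presented `S`-act: isomorphic to `F_S(X)/ρ` with `X` finite and
`ρ` a finitely generated congruence. -/
def IsFP (S : Type u) [Monoid S] (A : Type v) [RAct S A] : Prop :=
  ∃ (n : ℕ) (H : Set ((Fin n × S) × (Fin n × S))), H.Finite ∧
    ∃ φ : Fin n × S → A, IsRActHom S φ ∧ Function.Surjective φ ∧
      ∀ p q : Fin n × S, φ p = φ q ↔ congGen S H p q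

/-- A right coherent monoid. -/
def RightCoherent (S : Type u) [Monoid S] : Prop :=
  ∀ (A B : Type u) (_ : RAct S A) (_ : RAct S B) (ι : B → A),
    IsRActHom S ι → Function.Injective ι → IsFP S A → IsFG S B → IsFP S B

/-- The fem-property: every finitely generated `S`-act embeds into a monogenic act. -/
def FemProperty (S : Type u) [Monoid S] : Prop :=
  ∀ (A : Type u) (_ : RAct S A), IsFG S A → ∃ (C : Type u) (_ : RAct S C),
    Monogenic S C ∧ ActEmbeds S A C

/-- A subact of an `S`-act. -/
structure Subact (S : Type u) [Monoid S] (B : Type v) [RAct S B] where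
  carrier : Set B
  closed : ∀ b ∈ carrier, ∀ s : S, b ⊳ s ∈ carrier

instance subAct (S : Type u) [Monoid S] {B : Type v} [RAct S B] (T : Subact S B) :
    RAct S T.carrier where
  act a s := ⟨a.1 ⊳ s, T.closed a.1 a.2 s⟩
  act_one a := Subtype.ext (RAct.act_one a.1)
  act_mul a s t := Subtype.ext (RAct.act_mul a.1 s t)


def BuiltFrom (S : Type u) [Monoid S] {A B : Type v} [RAct S A] [RAct S B]
    (ι : A → B) (P : ℕ → Prop) : Prop :=
  IsRActHom S ι ∧ Function.Injective ι ∧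
  ∃ (ξ : Ordinal.{v}) (C : Ordinal.{v} → Subact S B),
    (C 0).carrier = Set.range ι ∧
    (∀ i j : Ordinal.{v}, i ≤ j → (C i).carrier ⊆ (C j).carrier) ∧
    (C ξ).carrier = Set.univ ∧
    (∀ ζ : Ordinal.{v}, ζ ≤ ξ → Order.IsSuccLimit ζ → (C ζ).carrier = ⋃ i ∈ Set.Iio ζ, (C i).carrier) ∧
    (∀ i : Ordinal.{v}, i < ξ → ∃ m : ℕ, P m ∧
      (∃ E : Set (Eqn S (↥(C i).carrier) (Fin m)), Consistent S E ∧
        (∃ e : ActExt S E → B, IsRActHom S e ∧ Function.Injective e ∧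
          Set.range e = (C (i + 1)).carrier ∧
          (∀ d : ↥(C i).carrier, e (extOfBase S E d) = d.1))))

/-!
Let `A ⊆ B` be acts, with `A` almost pure over a finite monoid `S`, and let `f : B → A` be a map
that is an `S`-morphism on a subact `D ⊇ A`. For `b ∈ B`, the equations `x s = x t` (for
`b s = b t`) and `x s = f (b s)` (for `b s ∈ D`) form a system in one variable, finite since `S`
is, and consistent: it is solved by the image of `b` in the pushout of `A ← D → B`. A solution
`c ∈ A` lets us extend `f` to `D ∪ bS` by `b u ↦ c u`. Adjoining the finitely many values of a
solution of a system over `A` one at a time yields a morphism on a subact containing them that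
retracts `B` onto `A`; it maps the solution in `B` to one in `A`.
-/

variable {S : Type u} [Monoid S] {A : Type v} {B : Type w} [RAct S B]

theorem IsSolution.comp {X : Type*} {C : Type*} [RAct S C] {ι : A → B}
    {E : Set (Eqn S A X)} {b : X → B} (hb : IsSolution S ι E b) (g : B → C)
    (hg : ∀ x (s : S), g (b x ⊳ s) = g (b x) ⊳ s) : IsSolution S (g ∘ ι) E (g ∘ b) :=
  ⟨fun x s y t he => by simp only [Function.comp, ← hg, hb.1 x s y t he],
    fun x s a he => by simp only [Function.comp, ← hg, hb.2 x s a he]⟩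

section

variable [RAct S A]

variable (S) in
def IsRActHomOn (f : B → A) (D : Set B) : Prop :=
  ∀ x ∈ D, ∀ s : S, f (x ⊳ s) = f x ⊳ s

theorem isRActHomOn_invFun_range [Nonempty A] {ι : A → B} (hinj : Function.Injective ι)
    (hhom : IsRActHom S ι) : IsRActHomOn S (Function.invFun ι) (Set.range ι) := by
  rintro _ ⟨a, rfl⟩ s
  rw [← hhom, Function.leftInverse_invFun hinj, Function.leftInverse_invFun hinj]

theorem AlmostPure.nonempty (hA : AlmostPure S A) : Nonempty A := by
  have hcons : Consistent S (∅ : Set (Eqn S A (Fin 1))) :=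
    ⟨A ⊕ (Fin 1 × S), inferInstance, Sum.inl, Sum.inl_injective, fun _ _ => rfl,
      fun x => Sum.inr (x, 1), fun _ _ _ _ h => h.elim, fun _ _ _ h => h.elim⟩
  obtain ⟨c, -⟩ := hA ∅ Set.finite_empty hcons
  exact ⟨c 0⟩

end

namespace Subact

def ofRange [RAct S A] (ι : A → B) (hι : IsRActHom S ι) : Subact S B where
  carrier := Set.range ι
  closed := by
    rintro _ ⟨a, rfl⟩ s
    exact ⟨a ⊳ s, hι a s⟩

def adjoin (D : Subact S B) (b : B) : Subact S B where
  carrier := D.carrier ∪ Set.range (b ⊳ ·)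
  closed := by
    rintro x (hx | ⟨u, rfl⟩) s
    · exact Or.inl (D.closed x hx s)
    · exact Or.inr ⟨u * s, RAct.act_mul b u s⟩

theorem subset_adjoin (D : Subact S B) (b : B) : D.carrier ⊆ (D.adjoin b).carrier :=
  Set.subset_union_left

theorem act_mem_adjoin (D : Subact S B) (b : B) (s : S) : b ⊳ s ∈ (D.adjoin b).carrier :=
  Or.inr ⟨s, rfl⟩

section Amalgam

open Classical

variable (f : B → A) (D : Subact S B)

/-- The pushout of `A ← D → B` along `f` and the inclusion: `D` is collapsed onto its image
in `A`, and `amalgamMk` below is the map from `B`. -/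
abbrev Amalgam (A : Type v) (D : Subact S B) : Type (max v w) := A ⊕ {x : B // x ∉ D.carrier}

noncomputable def amalgamMk (x : B) : D.Amalgam A :=
  if hx : x ∈ D.carrier then Sum.inl (f x) else Sum.inr ⟨x, hx⟩

theorem amalgamMk_of_mem {x : B} (hx : x ∈ D.carrier) : D.amalgamMk f x = Sum.inl (f x) :=
  dif_pos hx

variable [RAct S A]

noncomputable def amalgamSMul (p : D.Amalgam A) (s : S) : D.Amalgam A :=
  Sum.elim (fun a => Sum.inl (a ⊳ s)) (fun x => D.amalgamMk f (x.1 ⊳ s)) p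

variable {f D}

theorem amalgamSMul_mk (hf : IsRActHomOn S f D.carrier) (x : B) (s : S) :
    D.amalgamSMul f (D.amalgamMk f x) s = D.amalgamMk f (x ⊳ s) := by
  by_cases hx : x ∈ D.carrier
  · rw [amalgamMk_of_mem f D hx, amalgamMk_of_mem f D (D.closed x hx s), hf x hx s]
    rfl
  · rw [amalgamMk, dif_neg hx]
    rfl

noncomputable abbrev amalgamAct (hf : IsRActHomOn S f D.carrier) : RAct S (D.Amalgam A) where
  act := D.amalgamSMul f
  act_one := by
    rintro (a | x)
    · exact congrArg Sum.inl (RAct.act_one a)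
    · change D.amalgamMk f (x.1 ⊳ 1) = _
      rw [RAct.act_one, amalgamMk, dif_neg x.2]
  act_mul := by
    rintro (a | x) s t
    · exact congrArg Sum.inl (RAct.act_mul a s t)
    · change D.amalgamMk f (x.1 ⊳ (s * t)) = D.amalgamSMul f (D.amalgamMk f (x.1 ⊳ s)) t
      rw [amalgamSMul_mk hf, RAct.act_mul]

end Amalgam

section Extension

open Classical

variable (f : B → A) (D : Subact S B) (b : B)

def adjoinSystem : Set (Eqn S A (Fin 1)) :=
  {e | (∃ s t, b ⊳ s = b ⊳ t ∧ e = Eqn.vv 0 s 0 t) ∨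
    (∃ s, b ⊳ s ∈ D.carrier ∧ e = Eqn.vc 0 s (f (b ⊳ s)))}

theorem adjoinSystem_finite [Finite S] : (D.adjoinSystem f b).Finite := by
  refine ((Set.finite_range fun p : S × S => Eqn.vv (0 : Fin 1) p.1 0 p.2).union
    (Set.finite_range fun s => Eqn.vc (0 : Fin 1) s (f (b ⊳ s)))).subset ?_
  rintro e (⟨s, t, -, rfl⟩ | ⟨s, -, rfl⟩)
  · exact Or.inl ⟨(s, t), rfl⟩
  · exact Or.inr ⟨s, rfl⟩

theorem isSolution_adjoinSystem_iff {C : Type*} [RAct S C] (ι : A → C) (c : Fin 1 → C) :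
    IsSolution S ι (D.adjoinSystem f b) c ↔
      (∀ s t : S, b ⊳ s = b ⊳ t → c 0 ⊳ s = c 0 ⊳ t) ∧
      (∀ s : S, b ⊳ s ∈ D.carrier → c 0 ⊳ s = ι (f (b ⊳ s))) := by
  constructor
  · rintro ⟨hvv, hvc⟩
    exact ⟨fun s t h => hvv 0 s 0 t (Or.inl ⟨s, t, h, rfl⟩),
      fun s h => hvc 0 s _ (Or.inr ⟨s, h, rfl⟩)⟩
  · rintro ⟨hvv, hvc⟩
    refine ⟨?_, ?_⟩
    · rintro x s y t (⟨s', t', h, he⟩ | ⟨_, _, he⟩) <;> cases he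
      exact hvv s t h
    · rintro x s a (⟨_, _, _, he⟩ | ⟨s', h, he⟩) <;> cases he
      exact hvc s h

variable [RAct S A]

noncomputable def extend (c : A) (x : B) : A :=
  if hx : x ∉ D.carrier ∧ ∃ u : S, b ⊳ u = x then c ⊳ hx.2.choose else f x

variable {b}

theorem extend_eqOn (c : A) : Set.EqOn (D.extend f b c) f D.carrier :=
  fun _ hx => dif_neg fun h => h.1 hx

theorem extend_act {c : A} (hc : IsSolution S id (D.adjoinSystem f b) fun _ => c) (u : S) :
    D.extend f b c (b ⊳ u) = c ⊳ u := by
  obtain ⟨hvv, hvc⟩ := (isSolution_adjoinSystem_iff f D b _ _).1 hc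
  by_cases hu : b ⊳ u ∈ D.carrier
  · rw [extend_eqOn f D c hu, hvc u hu]
    rfl
  · have hx : b ⊳ u ∉ D.carrier ∧ ∃ u' : S, b ⊳ u' = b ⊳ u := ⟨hu, u, rfl⟩
    rw [extend, dif_pos hx]
    exact hvv _ _ hx.2.choose_spec

variable {f D}

theorem isRActHomOn_extend (hf : IsRActHomOn S f D.carrier) {c : A}
    (hc : IsSolution S id (D.adjoinSystem f b) fun _ => c) :
    IsRActHomOn S (D.extend f b c) (D.adjoin b).carrier := by
  rintro x (hx | ⟨u, rfl⟩) s
  · rw [extend_eqOn f D c hx, extend_eqOn f D c (D.closed x hx s), hf x hx s]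
  · rw [← RAct.act_mul, extend_act f D hc, extend_act f D hc, RAct.act_mul]

end Extension

theorem adjoinSystem_consistent [RAct S A] {B : Type (max u v)} [RAct S B] {f : B → A}
    {D : Subact S B} (hf : IsRActHomOn S f D.carrier) (b : B) :
    Consistent S (D.adjoinSystem f b) := by
  let _ := amalgamAct hf
  have hmk : IsRActHom S (D.amalgamMk f) := fun x s => (amalgamSMul_mk hf x s).symm
  refine ⟨D.Amalgam A, amalgamAct hf, Sum.inl, Sum.inl_injective, fun _ _ => rfl,
    fun _ => D.amalgamMk f b, (isSolution_adjoinSystem_iff f D b _ _).2 ⟨?_, ?_⟩⟩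
  · intro s t h
    rw [← hmk, ← hmk, h]
  · intro s h
    rw [← hmk, amalgamMk_of_mem f D h]

theorem exists_extension_adjoin [RAct S A] [Finite S] (hA : AlmostPure S A)
    {B : Type (max u v)} [RAct S B] {f : B → A} {D : Subact S B}
    (hf : IsRActHomOn S f D.carrier) (b : B) :
    ∃ g : B → A, Set.EqOn g f D.carrier ∧ IsRActHomOn S g (D.adjoin b).carrier := by
  obtain ⟨c, hc⟩ := hA _ (D.adjoinSystem_finite f b) (adjoinSystem_consistent hf b)
  have hc' : IsSolution S id (D.adjoinSystem f b) fun _ => c 0 := by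
    convert hc using 2
    exact congrArg c (Subsingleton.elim _ _)
  exact ⟨D.extend f b (c 0), extend_eqOn f D _, isRActHomOn_extend hf hc'⟩

theorem exists_extension_finset [RAct S A] [Finite S] (hA : AlmostPure S A)
    {B : Type (max u v)} [RAct S B] [DecidableEq B] (F : Finset B) :
    ∀ {f : B → A} {D : Subact S B}, IsRActHomOn S f D.carrier →
      ∃ g : B → A, Set.EqOn g f D.carrier ∧ ∀ b ∈ F, ∀ s : S, g (b ⊳ s) = g b ⊳ s := by
  induction F using Finset.induction_on with
  | empty => exact fun _ => ⟨_, Set.eqOn_refl _ _, by simp⟩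
  | insert b F _ ih =>
    intro f D hf
    obtain ⟨g₁, hg₁f, hg₁⟩ := exists_extension_adjoin hA hf b
    obtain ⟨g, hgg₁, hg⟩ := ih hg₁
    refine ⟨g, fun x hx => (hgg₁ (subset_adjoin D b hx)).trans (hg₁f hx), ?_⟩
    rintro b' hb' s
    rcases Finset.mem_insert.1 hb' with rfl | hb'
    · have hb : b' ∈ (D.adjoin b').carrier := Or.inr ⟨1, RAct.act_one b'⟩
      rw [hgg₁ (act_mem_adjoin D b' s), hgg₁ hb, hg₁ b' hb s]
    · exact hg b' hb' s

end Subact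

theorem finite_almostPure_absolutelyPure (S : Type u) [Monoid S] [Finite S]
    (A : Type v) [RAct S A]
    (hA : AlmostPure S A) : AbsolutelyPure S A := by
  classical
  have := hA.nonempty
  rintro n E - ⟨B, _, ι, hinj, hhom, b, hb⟩
  obtain ⟨g, hgι, hg⟩ := Subact.exists_extension_finset hA (Finset.univ.image b)
    (D := Subact.ofRange ι hhom) (isRActHomOn_invFun_range hinj hhom)
  have hgι' : g ∘ ι = id := funext fun a =>
    (hgι (Set.mem_range_self a)).trans (Function.leftInverse_invFun hinj a)
  exact ⟨g ∘ b, hgι' ▸ hb.comp g fun i => hg (b i)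
    (Finset.mem_image_of_mem b (Finset.mem_univ i))⟩
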